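/- arXiv:1904.05113 — 6 statements merged into one kernel-verified Lean document; each statement's English description precedes it below -/
import Mathlib

section
/- There exists an infinite (countably infinite) family of permutations of the natural numbers such that for any two distinct permutations σ, τ in the family, the sequence j ↦ |σ(j) - τ(j)| tends to infinity. -/
open Filter

/-!
Cut ℕ into the consecutive blocks `[k², (k+1)²)` of length `2k+1` and let `σᵢ` rotate block `k`
cyclically by `i⌊√k⌋`. For `i ≠ j`, once `|i - j| ≤ ⌊√k⌋` the two rotations differ by
`d = |i - j|⌊√k⌋ ≤ k`, so `σᵢ(n)` and `σⱼ(n)` lie in the same block at cyclic distance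
`min d (2k + 1 - d) ≥ ⌊√k⌋`, which tends to infinity with `n`.
-/

theorem Fin.min_val_sub_le_abs_sub {L : ℕ} (u v : Fin L) :
    ((min (u - v).val (L - (u - v).val) : ℕ) : ℤ) ≤ |(u : ℤ) - v| := by
  rcases le_or_gt v u with hvu | huv
  · have := Fin.coe_sub_iff_le.mpr hvu
    rw [abs_of_nonneg (by omega)]
    omega
  · have := Fin.coe_sub_iff_lt.mpr huv
    rw [abs_of_neg (by omega)]
    omega

theorem Nat.tendsto_sqrt_atTop : Tendsto Nat.sqrt atTop atTop :=
  tendsto_atTop_atTop_of_monotone (fun _ _ => Nat.sqrt_le_sqrt)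
    fun k => ⟨k * k, (Nat.sqrt_eq k).ge⟩

def squareBlockEquiv : ℕ ≃ Σ k : ℕ, Fin (2 * k + 1) where
  toFun n := ⟨Nat.sqrt n, ⟨n - Nat.sqrt n * Nat.sqrt n, by
    have := Nat.lt_succ_sqrt n
    rw [Nat.succ_mul_succ] at this
    omega⟩⟩
  invFun p := p.1 * p.1 + p.2
  left_inv n := Nat.add_sub_of_le (Nat.sqrt_le n)
  right_inv := fun ⟨k, m⟩ => by
    have hk : Nat.sqrt (k * k + m) = k := Nat.sqrt_add_eq k (by omega)
    exact Sigma.ext hk ((Fin.heq_ext_iff (by simp only [hk])).mpr (by simp [hk]))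

def blockRotation (s : ∀ k, Fin (2 * k + 1)) : Equiv.Perm ℕ :=
  squareBlockEquiv.symm.permCongr (Equiv.sigmaCongrRight fun k => Equiv.addLeft (s k))

theorem blockRotation_apply (s : ∀ k, Fin (2 * k + 1)) (n : ℕ) :
    blockRotation s n =
      (squareBlockEquiv n).1 * (squareBlockEquiv n).1 + (s _ + (squareBlockEquiv n).2 : Fin _) :=
  rfl

theorem min_le_abs_blockRotation_sub (s t : ∀ k, Fin (2 * k + 1)) (n : ℕ) :
    ((min (s (Nat.sqrt n) - t (Nat.sqrt n)).val
      (2 * Nat.sqrt n + 1 - (s (Nat.sqrt n) - t (Nat.sqrt n)).val) : ℕ) : ℤ) ≤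
      |(blockRotation s n : ℤ) - blockRotation t n| := by
  have h := Fin.min_val_sub_le_abs_sub (s _ + (squareBlockEquiv n).2) (t _ + (squareBlockEquiv n).2)
  rw [add_sub_add_right_eq_sub] at h
  simp only [blockRotation_apply, Nat.cast_add, add_sub_add_left_eq_sub] at h ⊢
  exact h

open Fin.NatCast in
def sqrtShift (i k : ℕ) : Fin (2 * k + 1) := (i * Nat.sqrt k : ℕ)

open Fin.NatCast in
theorem sqrtShift_sub_val {i j k : ℕ} (hji : j ≤ i) (h : (i - j) * Nat.sqrt k < 2 * k + 1) :
    (sqrtShift i k - sqrtShift j k).val = (i - j) * Nat.sqrt k := by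
  have : i * Nat.sqrt k = (i - j) * Nat.sqrt k + j * Nat.sqrt k := by
    rw [← add_mul, Nat.sub_add_cancel hji]
  rw [sqrtShift, sqrtShift, this, Nat.cast_add, add_sub_cancel_right, Fin.val_natCast,
    Nat.mod_eq_of_lt h]

theorem sqrt_le_min_sqrtShift_sub {i j k : ℕ} (hji : j < i) (h : i - j ≤ Nat.sqrt k) :
    Nat.sqrt k ≤ min (sqrtShift i k - sqrtShift j k).val
      (2 * k + 1 - (sqrtShift i k - sqrtShift j k).val) := by
  have hck : Nat.sqrt k * Nat.sqrt k ≤ k := Nat.sqrt_le k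
  have hd : (i - j) * Nat.sqrt k ≤ k := (Nat.mul_le_mul_right _ h).trans hck
  have hc : Nat.sqrt k ≤ (i - j) * Nat.sqrt k := Nat.le_mul_of_pos_left _ (by omega)
  have hk : Nat.sqrt k ≤ k := Nat.sqrt_le_self k
  rw [sqrtShift_sub_val hji.le (by omega)]
  omega

theorem sqrt_sqrt_le_abs_blockRotation_sub {i j n : ℕ} (hji : j < i)
    (h : i - j ≤ Nat.sqrt (Nat.sqrt n)) :
    (Nat.sqrt (Nat.sqrt n) : ℤ) ≤
      |(blockRotation (sqrtShift i) n : ℤ) - blockRotation (sqrtShift j) n| :=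
  le_trans (by exact_mod_cast sqrt_le_min_sqrtShift_sub hji h)
    (min_le_abs_blockRotation_sub _ _ n)

theorem tendsto_abs_blockRotation_sub {i j : ℕ} (hij : i ≠ j) :
    Tendsto (fun n : ℕ => |(blockRotation (sqrtShift i) n : ℤ) - blockRotation (sqrtShift j) n|)
      atTop atTop := by
  wlog hji : j < i generalizing i j
  · simpa only [abs_sub_comm] using this hij.symm (by omega)
  have hsqrt := Nat.tendsto_sqrt_atTop.comp Nat.tendsto_sqrt_atTop
  refine tendsto_atTop_mono' atTop ?_ ((tendsto_natCast_atTop_atTop (R := ℤ)).comp hsqrt)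
  filter_upwards [hsqrt.eventually_ge_atTop (i - j)] with n hn
    using sqrt_sqrt_le_abs_blockRotation_sub hji hn

/-- There are infinitely many pairwise divergent permutations of ℕ. -/
theorem divergent_permutations :
    ∃ F : ℕ → Equiv.Perm ℕ, Function.Injective F ∧
      ∀ i j : ℕ, i ≠ j →
        Tendsto (fun n : ℕ => |(F i n : ℤ) - (F j n : ℤ)|) atTop atTop := by
  refine ⟨fun i => blockRotation (sqrtShift i), fun i j h => ?_,
    fun i j => tendsto_abs_blockRotation_sub⟩
  by_contra hij
  have hdiv := tendsto_abs_blockRotation_sub hij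
  simp only [h, sub_self, abs_zero] at hdiv
  exact not_tendsto_const_atTop 0 atTop hdiv
end

section
/- There exists an uncountable family (of cardinality 2^ℵ₀) of permutations of ℕ such that any two distinct members are infinitely colliding, i.e., for any two distinct permutations σ, τ in the family there are infinitely many positions j with |σ(j) - τ(j)| = 1. -/
/-!
Split ℕ into the pairs {2m, 2m+1} and, for a set of indices `m`, swap exactly those pairs. Two
such permutations collide at `2m` whenever `m` lies in one index set but not the other. Indexing
the pairs by `Nat.pair n k` and swapping for all `k` exactly when `z n` holds, two distinct
`z, z' : ℕ → Bool` differ at some `n`, hence their permutations collide at the infinitely many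
points `2 * Nat.pair n k`.
-/

namespace Nat

theorem xor_one_div_two (j : ℕ) : (j ^^^ 1) / 2 = j / 2 := by
  rw [← shiftRight_one, ← shiftRight_one, shiftRight_xor_distrib]
  simp

end Nat

def swapPairs (p : ℕ → Bool) : Equiv.Perm ℕ :=
  Function.Involutive.toPerm (fun j => if p (j / 2) then j ^^^ 1 else j) fun j => by
    by_cases h : p (j / 2) <;> simp [h, Nat.xor_one_div_two]

theorem swapPairs_two_mul (p : ℕ → Bool) (m : ℕ) :
    swapPairs p (2 * m) = if p m then 2 * m + 1 else 2 * m := by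
  change (if p (2 * m / 2) then 2 * m ^^^ 1 else 2 * m) = _
  simp

theorem natAbs_sub_swapPairs_two_mul {p q : ℕ → Bool} {m : ℕ} (h : p m ≠ q m) :
    ((swapPairs p (2 * m) : ℤ) - swapPairs q (2 * m)).natAbs = 1 := by
  rw [swapPairs_two_mul, swapPairs_two_mul]
  cases hp : p m <;> cases hq : q m <;> simp_all

theorem infinite_setOf_ne_comp_unpair_fst {z z' : ℕ → Bool} (h : z ≠ z') :
    {m | z (Nat.unpair m).1 ≠ z' (Nat.unpair m).1}.Infinite := by
  obtain ⟨n, hn⟩ := Function.ne_iff.mp h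
  refine (Set.infinite_range_of_injective (f := Nat.pair n)
    fun a b hab => (Nat.pair_eq_pair.mp hab).2).mono ?_
  rintro _ ⟨k, rfl⟩
  simpa using hn

/-- There is an uncountable family (indexed by {0,1}^ℕ) of permutations of ℕ,
any two distinct members of which are infinitely colliding. -/
theorem uncountably_many_infinitely_colliding :
    ∃ F : (ℕ → Bool) → Equiv.Perm ℕ, Function.Injective F ∧
      ∀ z z' : ℕ → Bool, z ≠ z' →
        {j : ℕ | ((F z j : ℤ) - (F z' j : ℤ)).natAbs = 1}.Infinite := by
  set F : (ℕ → Bool) → Equiv.Perm ℕ := fun z => swapPairs fun m => z (Nat.unpair m).1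
  have colliding : ∀ z z' : ℕ → Bool, z ≠ z' →
      {j : ℕ | ((F z j : ℤ) - (F z' j : ℤ)).natAbs = 1}.Infinite := fun z z' h =>
    ((infinite_setOf_ne_comp_unpair_fst h).image (mul_right_injective₀ two_ne_zero).injOn).mono
      (by rintro _ ⟨m, hm, rfl⟩; exact natAbs_sub_swapPairs_two_mul hm)
  refine ⟨F, fun z z' hF => ?_, colliding⟩
  by_contra h
  obtain ⟨j, hj⟩ := (colliding z z' h).nonempty
  simp [hF] at hj
end

section
/- There exist infinitely many permutations of ℕ that are pairwise infinitely colliding: for any two distinct permutations σ, τ in the family, there are infinitely many positions j such that |σ(j) - τ(j)| = 1. -/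
private def swapFn (n m : ℕ) : ℕ :=
  if Nat.testBit (m / 2) n then 2 * (m / 2) + (1 - m % 2) else m

private lemma swapFn_involutive (n : ℕ) : Function.Involutive (swapFn n) := by
  intro m
  unfold swapFn
  by_cases h : Nat.testBit (m / 2) n
  · have hd : (2 * (m / 2) + (1 - m % 2)) / 2 = m / 2 := by omega
    simp only [h, if_true, hd, if_true]
    omega
  · simp [h]

private def F (n : ℕ) : Equiv.Perm ℕ := (swapFn_involutive n).toPerm

private lemma bit_sep {i j : ℕ} (hij : i ≠ j) (t : ℕ) :
    Nat.testBit (2 ^ (max i j + 1) * t + 2 ^ i) i = true ∧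
    Nat.testBit (2 ^ (max i j + 1) * t + 2 ^ i) j = false := by
  have hb : 2 ^ i < 2 ^ (max i j + 1) :=
    Nat.pow_lt_pow_right (by norm_num) (by omega)
  constructor
  · rw [Nat.testBit_two_pow_mul_add t hb i, if_pos (by omega)]
    exact Nat.testBit_two_pow_self
  · rw [Nat.testBit_two_pow_mul_add t hb j, if_pos (by omega)]
    exact Nat.testBit_two_pow_of_ne hij

/-- There are infinitely many permutations of ℕ that are pairwise infinitely colliding. -/
theorem infinitely_many_infinitely_colliding :
    ∃ F : ℕ → Equiv.Perm ℕ, Function.Injective F ∧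
      ∀ i j : ℕ, i ≠ j →
        {m : ℕ | ((F i m : ℤ) - (F j m : ℤ)).natAbs = 1}.Infinite := by
  refine ⟨F, ?_, ?_⟩
  · intro i j hij
    by_contra hne
    have := bit_sep hne 0
    simp only [Nat.mul_zero, Nat.zero_add] at this
    have h1 : F i (2 * 2 ^ i) = 2 * 2 ^ i + 1 := by
      show swapFn i (2 * 2 ^ i) = 2 * 2 ^ i + 1
      unfold swapFn
      rw [Nat.mul_div_cancel_left _ (by norm_num), if_pos this.1]
      omega
    have h2 : F j (2 * 2 ^ i) = 2 * 2 ^ i := by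
      show swapFn j (2 * 2 ^ i) = 2 * 2 ^ i
      unfold swapFn
      rw [Nat.mul_div_cancel_left _ (by norm_num), if_neg (by simp [this.2])]
    rw [hij] at h1
    omega
  · intro i j hij
    apply Set.infinite_of_injective_forall_mem
      (f := fun t : ℕ => 2 * (2 ^ (max i j + 1) * t + 2 ^ i))
    case hi =>
      intro a b hab
      simp only at hab
      have h0 : 0 < (2:ℕ) ^ (max i j + 1) := by positivity
      exact Nat.eq_of_mul_eq_mul_left h0 (by omega)
    case hf =>
      intro t
      obtain ⟨hi, hj⟩ := bit_sep hij t
      set k := 2 ^ (max i j + 1) * t + 2 ^ i with hk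
      have hdiv : (2 * k) / 2 = k := by omega
      have h1 : F i (2 * k) = 2 * k + 1 := by
        show swapFn i (2 * k) = 2 * k + 1
        unfold swapFn
        rw [hdiv, if_pos hi]
        omega
      have h2 : F j (2 * k) = 2 * k := by
        show swapFn j (2 * k) = 2 * k
        unfold swapFn
        rw [hdiv, if_neg (by simp [hj])]
      simp only [Set.mem_setOf_eq, h1, h2]
      push_cast
      omega
end

section
/- Let G be a graph on vertex set ℕ that contains an infinite matching (an infinite set of pairwise vertex-disjoint edges). Then there exist uncountably many permutations of ℕ such that any two distinct ones agree with G in infinitely many positions, i.e., for any two distinct permutations σ, τ in the family, {j : σ(j) and τ(j) are adjacent in G} is infinite. -/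
/-!
Split the matching into countably many infinite blocks, one per coordinate of `z : ℕ → Bool`,
and let `F z` swap the two endpoints of every edge in block `m` exactly when `z m = true`.
Then `F` is injective, and if `z m ≠ z' m` then `F z` and `F z'` differ by a swap on each of
the infinitely many edges of block `m`, so at one endpoint of each such edge they take
adjacent values.
-/

open Function

namespace Equiv.Perm

open scoped Classical

variable {ι α : Type*} (e : ι × Bool → α) (he : Injective e)

/-- Given an injective labelling `e` of pairs of points of `α`, the permutation of `α` that
exchanges `e (i, false)` and `e (i, true)` for every `i` with `z i = true` and fixes all else. -/
noncomputable def swapPairs (z : ι → Bool) : Perm α :=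
  (Involutive.toPerm (fun p : ι × Bool => (p.1, z p.1 ^^ p.2)) fun p => by simp).extendDomain
    (Equiv.ofInjective e he)

theorem swapPairs_apply (z : ι → Bool) (i : ι) (t : Bool) :
    swapPairs e he z (e (i, t)) = e (i, z i ^^ t) :=
  extendDomain_apply_image _ (Equiv.ofInjective e he) (i, t)

theorem swapPairs_injective : Injective (swapPairs e he) := by
  intro z z' h
  funext i
  have hi := congrArg (· (e (i, false))) h
  simpa only [swapPairs_apply, Bool.xor_false, he.eq_iff, Prod.mk.injEq, true_and] using hi

theorem swapPairs_apply_of_ne {z z' : ι → Bool} {i : ι} (hi : z i ≠ z' i) :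
    swapPairs e he z (e (i, z i)) = e (i, false) ∧
      swapPairs e he z' (e (i, z i)) = e (i, true) := by
  rw [swapPairs_apply, swapPairs_apply, Bool.xor_self]
  cases h : z i <;> cases h' : z' i <;> simp_all

end Equiv.Perm

def matchingEndpoint {ι α : Type*} (a b : ι → α) (p : ι × Bool) : α :=
  bif p.2 then b p.1 else a p.1

theorem matchingEndpoint_injective {ι α : Type*} {a b : ι → α}
    (hdisj : ∀ m n : ι, a m ≠ b n ∧ (m ≠ n → a m ≠ a n ∧ b m ≠ b n)) :
    Injective (matchingEndpoint a b) := by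
  rintro ⟨m, s⟩ ⟨n, t⟩ h
  have hmn : m = n := by
    by_contra hne
    cases s <;> cases t <;> simp only [matchingEndpoint, cond_false, cond_true] at h
    exacts [(hdisj m n).2 hne |>.1 h, (hdisj m n).1 h, (hdisj n m).1 h.symm,
      (hdisj m n).2 hne |>.2 h]
  subst hmn
  cases s <;> cases t <;> simp only [matchingEndpoint, cond_false, cond_true] at h
  exacts [rfl, ((hdisj m m).1 h).elim, ((hdisj m m).1 h.symm).elim, rfl]

theorem infinite_matching_uncountable_family_general (Adj : ℕ → ℕ → Prop)
    (a b : ℕ → ℕ) (hedge : ∀ n, Adj (a n) (b n))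
    (hdisj : ∀ m n : ℕ, a m ≠ b n ∧ (m ≠ n → a m ≠ a n ∧ b m ≠ b n)) :
    ∃ F : (ℕ → Bool) → Equiv.Perm ℕ, Function.Injective F ∧
      ∀ z z' : ℕ → Bool, z ≠ z' →
        {j : ℕ | Adj (F z j) (F z' j)}.Infinite := by
  -- block `m` consists of the edges numbered `Nat.pair m k`, `k : ℕ`
  set e : (ℕ × ℕ) × Bool → ℕ := matchingEndpoint a b ∘ Prod.map Nat.pairEquiv id
  have he : Injective e :=
    (matchingEndpoint_injective hdisj).comp (Nat.pairEquiv.injective.prodMap injective_id)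
  refine ⟨fun z => Equiv.Perm.swapPairs e he (z ∘ Prod.fst),
    (Equiv.Perm.swapPairs_injective e he).comp Prod.fst_surjective.injective_comp_right, ?_⟩
  intro z z' hne
  obtain ⟨m, hm⟩ := Function.ne_iff.mp hne
  refine Set.infinite_of_injective_forall_mem (f := fun k => e ((m, k), z m)) ?_ fun k => ?_
  · intro k k' h
    simpa using he h
  · obtain ⟨hz, hz'⟩ := Equiv.Perm.swapPairs_apply_of_ne e he (z := z ∘ Prod.fst)
      (z' := z' ∘ Prod.fst) (i := (m, k)) hm
    dsimp only [comp_apply] at hz hz'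
    simp only [Set.mem_ofPred_eq, hz, hz']
    exact hedge _

/-- If a graph on ℕ contains an infinite matching, then there are uncountably many
permutations of ℕ, any two distinct ones of which are adjacent in infinitely many
positions. -/
theorem infinite_matching_uncountable_family (Adj : ℕ → ℕ → Prop)
    (hsymm : Symmetric Adj) (hirr : Irreflexive Adj)
    (a b : ℕ → ℕ) (hedge : ∀ n, Adj (a n) (b n))
    (hdisj : ∀ m n : ℕ, a m ≠ b n ∧ (m ≠ n → a m ≠ a n ∧ b m ≠ b n)) :
    ∃ F : (ℕ → Bool) → Equiv.Perm ℕ, Function.Injective F ∧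
      ∀ z z' : ℕ → Bool, z ≠ z' →
        {j : ℕ | Adj (F z j) (F z' j)}.Infinite :=
  infinite_matching_uncountable_family_general Adj a b hedge hdisj
end

section
/- Let ρ_z be the permutation of ℕ associated to the binary sequence z as follows: for every j with z(j) = 1 and every odd prime p, ρ_z swaps p^{j+2} and p^{j+2}+1, fixing everything else. Then for any two distinct binary sequences z, z', the permutations ρ_z and ρ_{z'} differ in infinitely many positions, and at every position n where they differ, |ρ_z(n) − ρ_{z'}(n)| = 1. -/
/-!
At an odd prime power `n = p ^ (j + 2)` the map `rhoZ z` moves `n` exactly when `z j = true`,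
because `n` determines `p` and `j` and is odd, so it is never of the form `q ^ (k + 2) + 1`.
Hence if `z j ≠ z' j`, the permutations differ at `p ^ (j + 2)` for each of the infinitely
many odd primes `p`. Every value `rhoZ z n` is `n`, `n + 1` (only for odd `n`) or `n - 1`
(only for even `n`), so two such values that differ are never `n + 1` and `n - 1` at once.
-/

open Classical in
/-- The permutation associated to a binary sequence z: for each j with z j = true and
each odd prime p, swap p^(j+2) with p^(j+2) + 1; fix everything else. -/
noncomputable def rhoZ (z : ℕ → Bool) (n : ℕ) : ℕ :=
  if ∃ p j : ℕ, p.Prime ∧ Odd p ∧ z j = true ∧ n = p ^ (j + 2) then n + 1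
  else if ∃ p j : ℕ, p.Prime ∧ Odd p ∧ z j = true ∧ n = p ^ (j + 2) + 1 then n - 1
  else n

lemma rhoZ_eq_or_succ_or_pred (z : ℕ → Bool) (n : ℕ) :
    rhoZ z n = n ∨ (rhoZ z n = n + 1 ∧ Odd n) ∨ (rhoZ z n + 1 = n ∧ Even n) := by
  unfold rhoZ
  split_ifs with h_low h_high
  · obtain ⟨p, j, -, hp_odd, -, rfl⟩ := h_low
    exact Or.inr (Or.inl ⟨rfl, hp_odd.pow⟩)
  · obtain ⟨p, j, -, hp_odd, -, rfl⟩ := h_high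
    exact Or.inr (Or.inr ⟨rfl, hp_odd.pow.add_one⟩)
  · exact Or.inl rfl

lemma natAbs_rhoZ_sub_rhoZ_eq_one {z z' : ℕ → Bool} {n : ℕ} (hne : rhoZ z n ≠ rhoZ z' n) :
    ((rhoZ z n : ℤ) - (rhoZ z' n : ℤ)).natAbs = 1 := by
  have h := rhoZ_eq_or_succ_or_pred z n
  have h' := rhoZ_eq_or_succ_or_pred z' n
  simp only [Nat.odd_iff, Nat.even_iff] at h h'
  omega

lemma rhoZ_odd_prime_pow (z : ℕ → Bool) {p : ℕ} (j : ℕ) (hp : p.Prime) (hp_odd : Odd p) :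
    rhoZ z (p ^ (j + 2)) = if z j then p ^ (j + 2) + 1 else p ^ (j + 2) := by
  cases hzj : z j
  · rw [if_neg Bool.false_ne_true]
    unfold rhoZ
    rw [if_neg, if_neg]
    · rintro ⟨q, k, -, hq_odd, -, h⟩
      have := hp_odd.pow (n := j + 2)
      rw [h] at this
      exact Nat.not_even_iff_odd.mpr this hq_odd.pow.add_one
    · rintro ⟨q, k, hq, -, hzk, h⟩
      obtain ⟨rfl, hjk⟩ := Nat.Prime.pow_inj hp hq h
      obtain rfl : j = k := Nat.succ_injective hjk
      exact Bool.false_ne_true (hzj ▸ hzk)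
  · exact if_pos ⟨p, j, hp, hp_odd, hzj, rfl⟩

lemma infinite_setOf_prime_and_odd : {p : ℕ | p.Prime ∧ Odd p}.Infinite :=
  (Nat.infinite_setOfPred_prime.sdiff (Set.finite_singleton 2)).mono
    fun _ hp ↦ ⟨hp.1, hp.1.odd_of_ne_two hp.2⟩

lemma infinite_setOf_rhoZ_ne {z z' : ℕ → Bool} {j : ℕ} (hj : z j ≠ z' j) :
    {n : ℕ | rhoZ z n ≠ rhoZ z' n}.Infinite := by
  have h_inj := (Nat.pow_left_injective (n := j + 2) (by omega)).injOn (s := {p | p.Prime ∧ Odd p})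
  refine (infinite_setOf_prime_and_odd.image h_inj).mono ?_
  rintro _ ⟨p, ⟨hp, hp_odd⟩, rfl⟩
  simp only [Set.mem_ofPred_eq, rhoZ_odd_prime_pow _ j hp hp_odd]
  revert hj
  cases z j <;> cases z' j <;> simp

/-- For distinct binary sequences z, z', the permutations rhoZ z and rhoZ z' differ in
infinitely many positions, and wherever they differ the values differ by exactly 1. -/
theorem rhoZ_infinitely_colliding (z z' : ℕ → Bool) (hzz : z ≠ z') :
    {n : ℕ | rhoZ z n ≠ rhoZ z' n}.Infinite ∧
      ∀ n : ℕ, rhoZ z n ≠ rhoZ z' n →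
        ((rhoZ z n : ℤ) - (rhoZ z' n : ℤ)).natAbs = 1 := by
  obtain ⟨j, hj⟩ := Function.ne_iff.mp hzz
  exact ⟨infinite_setOf_rhoZ_ne hj, fun _ ↦ natAbs_rhoZ_sub_rhoZ_eq_one⟩
end

section
/- Define x_i (for i ≥ 2) by x_i(2m) = i·m for m ≥ 1 and filling odd positions with the increasing enumeration of positive integers not of the form i·m. Then for i < k, the sequence of differences x_i(2m+1) − x_k(2m+1) over odd positions is nonnegative and tends to infinity; combined with the even-position differences (k−i)·m, the full difference sequence |x_i(n) − x_k(n)| tends to infinity, so x_i and x_k are divergent. -/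
/-!
The `m`-th positive non-multiple of `i` (counting from `m = 0`) is `m + 1 + ⌊m / (i - 1)⌋`,
since each run of `i - 1` non-multiples is followed by one skipped multiple. So at odd positions
`x_i - x_k = ⌊m / (i - 1)⌋ - ⌊m / (k - 1)⌋ ≥ ⌊m / ((i - 1)(k - 1))⌋ - (i - 1)`,
which is unbounded, while at even positions the difference is `(k - i) m`.
-/

open Filter

theorem Filter.tendsto_atTop_of_even_of_odd {α : Type*} {f : ℕ → α} {l : Filter α}
    (h₀ : Tendsto (fun m => f (2 * m)) atTop l)
    (h₁ : Tendsto (fun m => f (2 * m + 1)) atTop l) :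
    Tendsto f atTop l := fun s hs => by
  obtain ⟨a, ha⟩ := eventually_atTop.mp (h₀ hs)
  obtain ⟨b, hb⟩ := eventually_atTop.mp (h₁ hs)
  refine eventually_atTop.mpr ⟨2 * max a b, fun n hn => ?_⟩
  obtain ⟨m, rfl | rfl⟩ := Nat.even_or_odd' n
  · exact ha m (by omega)
  · exact hb m (by omega)

namespace Nat

def nthNonMultiple (i m : ℕ) : ℕ := m + 1 + m / (i - 1)

theorem strictMono_nthNonMultiple (i : ℕ) : StrictMono (nthNonMultiple i) := fun a b hab => by
  have : a / (i - 1) ≤ b / (i - 1) := Nat.div_le_div_right hab.le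
  simp only [nthNonMultiple]
  omega

theorem nthNonMultiple_mul_add {i q r : ℕ} (hr : r < i - 1) :
    nthNonMultiple i ((i - 1) * q + r) = i * q + (r + 1) := by
  have hq : ((i - 1) * q + r) / (i - 1) = q := by
    rw [add_comm, Nat.add_mul_div_left _ _ (by omega), Nat.div_eq_of_lt hr, zero_add]
  have hi : (i - 1) * q + q = i * q := by
    rw [← Nat.succ_mul, Nat.succ_eq_add_one, Nat.sub_add_cancel (by omega)]
  simp only [nthNonMultiple, hq]
  omega

theorem range_nthNonMultiple {i : ℕ} (hi : 2 ≤ i) :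
    Set.range (nthNonMultiple i) = {n | ¬ i ∣ n} := by
  ext n
  constructor
  · rintro ⟨m, rfl⟩
    rw [← Nat.div_add_mod m (i - 1), nthNonMultiple_mul_add (Nat.mod_lt _ (by omega)),
      Set.mem_ofPred_eq, Nat.dvd_add_right (dvd_mul_right i _)]
    have := Nat.mod_lt m (show 0 < i - 1 by omega)
    exact Nat.not_dvd_of_pos_of_lt (by omega) (by omega)
  · intro hn
    have hs : n % i ≠ 0 := fun h => hn (Nat.dvd_of_mod_eq_zero h)
    refine ⟨(i - 1) * (n / i) + (n % i - 1), ?_⟩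
    rw [nthNonMultiple_mul_add (by have := Nat.mod_lt n (show 0 < i by omega); omega),
      Nat.sub_add_cancel (Nat.pos_of_ne_zero hs), Nat.div_add_mod]

theorem nthNonMultiple_le_of_le {i k : ℕ} (hi : 2 ≤ i) (hik : i ≤ k) (m : ℕ) :
    nthNonMultiple k m ≤ nthNonMultiple i m := by
  have : m / (k - 1) ≤ m / (i - 1) := Nat.div_le_div_left (by omega) (by omega)
  simp only [nthNonMultiple]
  omega

theorem div_mul_le_div_sub_div_add {c d : ℕ} (hd : 0 < d) (hdc : d < c) (m : ℕ) :
    m / (c * d) ≤ m / d - m / c + d := by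
  set t := m / (c * d)
  have hc : t * c ≤ m / d :=
    (Nat.le_div_iff_mul_le hd).mpr (by rw [mul_assoc]; exact Nat.div_mul_le_self m (c * d))
  have hd' : m / c < t * d + d := by
    rw [← Nat.succ_mul, ← Nat.div_lt_iff_lt_mul hd, Nat.div_div_eq_div_mul]
    exact Nat.lt_succ_self t
  have hcd : t * d + t ≤ t * c := by
    rw [← Nat.mul_succ]; exact Nat.mul_le_mul_left t hdc
  omega

theorem tendsto_div_sub_div_atTop {c d : ℕ} (hd : 0 < d) (hdc : d < c) :
    Tendsto (fun m => m / d - m / c) atTop atTop :=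
  tendsto_atTop_mono (fun m => Nat.sub_le_of_le_add (div_mul_le_div_sub_div_add hd hdc m))
    ((tendsto_sub_atTop_nat d).comp <|
      Nat.tendsto_div_const_atTop (Nat.mul_pos (by omega) hd).ne')

theorem tendsto_nthNonMultiple_sub {i k : ℕ} (hi : 2 ≤ i) (hik : i < k) :
    Tendsto (fun m => nthNonMultiple i m - nthNonMultiple k m) atTop atTop := by
  refine (tendsto_div_sub_div_atTop (d := i - 1) (c := k - 1) (by omega) (by omega)).congr
    fun m => ?_
  simp only [nthNonMultiple]
  omega

theorem eq_nthNonMultiple {i : ℕ} (hi : 2 ≤ i) {f : ℕ → ℕ} (hf : StrictMono f)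
    (hrange : Set.range f = {n | ¬ i ∣ n}) : f = nthNonMultiple i :=
  (hf.range_inj (strictMono_nthNonMultiple i)).mp (hrange.trans (range_nthNonMultiple hi).symm)

theorem setOf_pos_and_not_exists_mul_eq (i : ℕ) :
    {n : ℕ | 0 < n ∧ ¬∃ m : ℕ, 1 ≤ m ∧ n = i * m} = {n | ¬ i ∣ n} := by
  ext n
  constructor
  · rintro ⟨hn, hmul⟩ ⟨m, rfl⟩
    exact hmul ⟨m, Nat.pos_of_ne_zero (by rintro rfl; simp at hn), rfl⟩
  · intro hn
    refine ⟨Nat.pos_of_ne_zero (by rintro rfl; exact hn (dvd_zero i)), ?_⟩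
    rintro ⟨m, -, rfl⟩
    exact hn (dvd_mul_right i m)

end Nat

/-- For 2 ≤ i < k, with x_i and x_k defined by x(2m) = i·m (resp. k·m) for m ≥ 1 and
the remaining positive integers in increasing order at odd positions: the odd-position
differences x_i − x_k are nonnegative and tend to infinity, and the full difference
sequence tends to infinity, i.e. x_i and x_k are divergent. -/
theorem xi_xk_divergent (i k : ℕ) (hi : 2 ≤ i) (hik : i < k)
    (xi xk : ℕ → ℕ)
    (hxi_even : ∀ m : ℕ, 1 ≤ m → xi (2 * m) = i * m)
    (hxk_even : ∀ m : ℕ, 1 ≤ m → xk (2 * m) = k * m)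
    (hxi_mono : StrictMono (fun m : ℕ => xi (2 * m + 1)))
    (hxk_mono : StrictMono (fun m : ℕ => xk (2 * m + 1)))
    (hxi_range : Set.range (fun m : ℕ => xi (2 * m + 1)) =
      {n : ℕ | 0 < n ∧ ¬∃ m : ℕ, 1 ≤ m ∧ n = i * m})
    (hxk_range : Set.range (fun m : ℕ => xk (2 * m + 1)) =
      {n : ℕ | 0 < n ∧ ¬∃ m : ℕ, 1 ≤ m ∧ n = k * m}) :
    (∀ m : ℕ, xk (2 * m + 1) ≤ xi (2 * m + 1)) ∧
      Tendsto (fun m : ℕ => xi (2 * m + 1) - xk (2 * m + 1)) atTop atTop ∧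
      Tendsto (fun n : ℕ => ((xi n : ℤ) - (xk n : ℤ)).natAbs) atTop atTop := by
  have hxi : ∀ m, xi (2 * m + 1) = Nat.nthNonMultiple i m := congrFun <|
    Nat.eq_nthNonMultiple hi hxi_mono (hxi_range.trans (Nat.setOf_pos_and_not_exists_mul_eq i))
  have hxk : ∀ m, xk (2 * m + 1) = Nat.nthNonMultiple k m := congrFun <|
    Nat.eq_nthNonMultiple (hi.trans hik.le) hxk_mono
      (hxk_range.trans (Nat.setOf_pos_and_not_exists_mul_eq k))
  have hodd_le : ∀ m, xk (2 * m + 1) ≤ xi (2 * m + 1) := fun m => by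
    rw [hxi, hxk]; exact Nat.nthNonMultiple_le_of_le hi hik.le m
  have hodd : Tendsto (fun m => xi (2 * m + 1) - xk (2 * m + 1)) atTop atTop := by
    simpa only [hxi, hxk] using Nat.tendsto_nthNonMultiple_sub hi hik
  refine ⟨hodd_le, hodd, tendsto_atTop_of_even_of_odd ?_ ?_⟩
  · refine tendsto_atTop_mono' atTop ?_ tendsto_id
    filter_upwards [eventually_ge_atTop 1] with m hm
    rw [hxi_even m hm, hxk_even m hm]
    have : i * m + m ≤ k * m := by nlinarith
    rw [id]
    omega
  · refine hodd.congr fun m => ?_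
    have := hodd_le m
    omega
end
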